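/- Adversarial interior-point cost-budget bound (Proposition 5.2, cost part): in a finite discounted MDP, let δ > 0, t > 0, ε_C ≥ 0, d ∈ ℝ, n1 ≥ 1, and let C : S → A → ℝ be a cost signal. Suppose a max-reward stage σ_0, …, σ_{n1} satisfies for every i < n1: (σ_i s a = 0 → σ_{i+1} s a = 0), D̄_KL(σ_{i+1}‖σ_i) ≤ δ, the cost surrogate constraint J_C(σ_i) + (1/(1−γ)) · 𝔸_C(σ_i, σ_{i+1}) ≤ d holds, and ε_C(σ_i, σ_{i+1}) ≤ ε_C; and a subsequent min-cost stage π_0 = σ_{n1}, π_1, …, π_{n2} satisfies for every i < n2: (π_i s a = 0 → π_{i+1} s a = 0), D̄_KL(π_{i+1}‖π_i) ≤ δ, 𝔸_C(π_i, π_{i+1}) ≤ 1/t, and ε_C(π_i, π_{i+1}) ≤ ε_C. Then J_C(π_{n2}) − d ≤ n2/((1−γ)·t) + (√(2δ) · γ / (1−γ)²) · (n1 + n2) · ε_C. -/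

import Mathlib

open Real BigOperators

/-- Induced transition matrix of policy `pol`: `P_pol(s,s') = ∑ a, pol s a * P s a s'`. -/
noncomputable def transMat {S A : Type*} [Fintype A] (P : S → A → S → ℝ)
    (pol : S → A → ℝ) : Matrix S S ℝ :=
  fun s s' => ∑ a, pol s a * P s a s'

/-- Discounted state visitation distribution
`d_pol(s) = (1-γ) ∑ₜ γ^t ∑_{s0} ρ0 s0 * (P_pol^t)(s0,s)`. -/
noncomputable def dVisit {S A : Type*} [Fintype S] [DecidableEq S] [Fintype A]
    (P : S → A → S → ℝ) (γ : ℝ) (ρ0 : S → ℝ) (pol : S → A → ℝ) (s : S) : ℝ :=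
  (1 - γ) * ∑' t : ℕ, γ ^ t * ∑ s0, ρ0 s0 * (transMat P pol ^ t) s0 s

/-- Value function of signal `F` under policy `pol`. -/
noncomputable def Vfun {S A : Type*} [Fintype S] [DecidableEq S] [Fintype A]
    (P : S → A → S → ℝ) (γ : ℝ) (F : S → A → ℝ) (pol : S → A → ℝ) (s : S) : ℝ :=
  ∑' t : ℕ, γ ^ t * ∑ s', (transMat P pol ^ t) s s' * ∑ a, pol s' a * F s' a

/-- Return `J_F(pol) = ∑ s, ρ0 s * V_F^pol(s)`. -/
noncomputable def Jret {S A : Type*} [Fintype S] [DecidableEq S] [Fintype A]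
    (P : S → A → S → ℝ) (γ : ℝ) (ρ0 : S → ℝ) (F : S → A → ℝ) (pol : S → A → ℝ) : ℝ :=
  ∑ s, ρ0 s * Vfun P γ F pol s

/-- Action-value function `Q_F^pol(s,a) = F s a + γ ∑_{s'} P s a s' * V_F^pol(s')`. -/
noncomputable def Qfun {S A : Type*} [Fintype S] [DecidableEq S] [Fintype A]
    (P : S → A → S → ℝ) (γ : ℝ) (F : S → A → ℝ) (pol : S → A → ℝ) (s : S) (a : A) : ℝ :=
  F s a + γ * ∑ s', P s a s' * Vfun P γ F pol s'

/-- Advantage function `A_F^pol(s,a) = Q_F^pol(s,a) - V_F^pol(s)`. -/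
noncomputable def Adv {S A : Type*} [Fintype S] [DecidableEq S] [Fintype A]
    (P : S → A → S → ℝ) (γ : ℝ) (F : S → A → ℝ) (pol : S → A → ℝ) (s : S) (a : A) : ℝ :=
  Qfun P γ F pol s a - Vfun P γ F pol s

/-- Expected surrogate advantage
`𝔸_F(pol,pol') = ∑ s, d_pol(s) ∑ a, pol' s a * A_F^pol(s,a)`. -/
noncomputable def surrAdv {S A : Type*} [Fintype S] [DecidableEq S] [Fintype A]
    (P : S → A → S → ℝ) (γ : ℝ) (ρ0 : S → ℝ) (F : S → A → ℝ)
    (pol pol' : S → A → ℝ) : ℝ :=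
  ∑ s, dVisit P γ ρ0 pol s * ∑ a, pol' s a * Adv P γ F pol s a

/-- `ε_F(pol,pol') = max_s |∑ a, pol' s a * A_F^pol(s,a)|`. -/
noncomputable def epsAdv {S A : Type*} [Fintype S] [DecidableEq S] [Fintype A] [Nonempty S]
    (P : S → A → S → ℝ) (γ : ℝ) (F : S → A → ℝ) (pol pol' : S → A → ℝ) : ℝ :=
  Finset.univ.sup' Finset.univ_nonempty fun s => |∑ a, pol' s a * Adv P γ F pol s a|

/-- Per-state KL divergence `KL(pol'‖pol)(s) = ∑ a, pol' s a * log (pol' s a / pol s a)`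
(with the convention `0 * log 0 = 0`, automatic since `Real.log 0 = 0`). -/
noncomputable def klState {S A : Type*} [Fintype A] (pol' pol : S → A → ℝ) (s : S) : ℝ :=
  ∑ a, pol' s a * Real.log (pol' s a / pol s a)

/-- Averaged KL divergence `D̄_KL(pol'‖pol) = ∑ s, d_pol(s) * KL(pol'‖pol)(s)`. -/
noncomputable def avgKL {S A : Type*} [Fintype S] [DecidableEq S] [Fintype A]
    (P : S → A → S → ℝ) (γ : ℝ) (ρ0 : S → ℝ) (pol' pol : S → A → ℝ) : ℝ :=
  ∑ s, dVisit P γ ρ0 pol s * klState pol' pol s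

/-!
Every step of both stages obeys the trust-region bound
`J(π') ≤ J(π) + 𝔸(π, π') / (1 - γ) + √(2 D̄_KL(π' ‖ π)) γ ε(π, π') / (1 - γ)²`.
By the performance difference lemma, `(1 - γ) (J(π') - J(π)) = ⟨d_π', g⟩` with
`g s = ∑ₐ π' s a A^π(s, a)`, while `𝔸(π, π') = ⟨d_π, g⟩`. Both visitation distributions solve
`d (1 - γ P_π) = (1 - γ) ρ₀`, which gives `‖d_π' - d_π‖₁ ≤ γ / (1 - γ) 𝔼_{d_π} ‖π' - π‖₁`, and
Pinsker's inequality with Cauchy–Schwarz bounds that expectation by `√(2 D̄_KL(π' ‖ π))`.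
The last max-reward step then leaves the cost at most `d` plus one error term, and each of the
`n₂` min-cost steps adds at most `1 / ((1 - γ) t)` plus one error term.
-/

open Matrix Finset

theorem HasSum.matrix_mulVec {ι m n R : Type*} [NonUnitalNonAssocSemiring R] [TopologicalSpace R]
    [IsTopologicalSemiring R] [Fintype n] {f : ι → Matrix m n R} {N : Matrix m n R} (v : n → R)
    (h : HasSum f N) : HasSum (fun i => f i *ᵥ v) (N *ᵥ v) :=
  h.map (mulVec.addMonoidHomLeft v) (continuous_id.matrix_mulVec continuous_const)

theorem HasSum.matrix_vecMul {ι m n R : Type*} [NonUnitalCommSemiring R] [TopologicalSpace R]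
    [IsTopologicalSemiring R] [Fintype m] {f : ι → Matrix m n R} {N : Matrix m n R} (u : m → R)
    (h : HasSum f N) : HasSum (fun i => u ᵥ* f i) (u ᵥ* N) := by
  simpa only [mulVec_transpose] using h.matrix_transpose.matrix_mulVec u

theorem Matrix.sum_abs_vecMul_le {m n : Type*} [Fintype m] [Fintype n] (x : m → ℝ)
    (B : Matrix m n ℝ) : ∑ j, |(x ᵥ* B) j| ≤ ∑ i, |x i| * ∑ j, |B i j| := by
  calc ∑ j, |(x ᵥ* B) j| ≤ ∑ j, ∑ i, |x i| * |B i j| :=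
        sum_le_sum fun j _ => (abs_sum_le_sum_abs _ _).trans_eq (by simp only [abs_mul])
    _ = ∑ i, |x i| * ∑ j, |B i j| := by rw [sum_comm]; simp only [mul_sum]

theorem Matrix.sum_abs_vecMul_le_of_mem_rowStochastic {n : Type*} [Fintype n] [DecidableEq n]
    {M : Matrix n n ℝ} (hM : M ∈ rowStochastic ℝ n) (x : n → ℝ) :
    ∑ j, |(x ᵥ* M) j| ≤ ∑ i, |x i| := by
  refine (sum_abs_vecMul_le x M).trans_eq (sum_congr rfl fun i _ => ?_)
  simp only [abs_of_nonneg (nonneg_of_mem_rowStochastic hM), sum_row_of_mem_rowStochastic hM,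
    mul_one]

theorem Matrix.sum_abs_sub_le_of_vecMul_one_sub_smul_eq {n : Type*} [Fintype n]
    [DecidableEq n] {M M' : Matrix n n ℝ} (hM' : M' ∈ rowStochastic ℝ n) {γ : ℝ} (hγ0 : 0 ≤ γ)
    (hγ1 : γ < 1) {d d' : n → ℝ} (hd : ∀ i, 0 ≤ d i) (h : d' ᵥ* (1 - γ • M') = d ᵥ* (1 - γ • M)) :
    ∑ i, |d' i - d i| ≤ γ / (1 - γ) * ∑ i, d i * ∑ j, |(M' - M) i j| := by
  set B := ∑ i, d i * ∑ j, |(M' - M) i j|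
  have hx : d' - d = γ • ((d' - d) ᵥ* M' + d ᵥ* (M' - M)) := by
    simp only [vecMul_sub, vecMul_one, vecMul_smul] at h
    rw [sub_vecMul, vecMul_sub]
    linear_combination (norm := module) h
  have hX : ∑ i, |(d' - d) i| ≤ γ * (∑ i, |(d' - d) i| + B) := by
    calc ∑ i, |(d' - d) i| = γ * ∑ i, |((d' - d) ᵥ* M' + d ᵥ* (M' - M)) i| := by
          conv_lhs => rw [hx]
          simp only [Pi.smul_apply, smul_eq_mul, abs_mul, abs_of_nonneg hγ0, mul_sum]
      _ ≤ γ * (∑ i, |((d' - d) ᵥ* M') i| + ∑ i, |(d ᵥ* (M' - M)) i|) := by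
          rw [← sum_add_distrib]
          exact mul_le_mul_of_nonneg_left (sum_le_sum fun i _ => abs_add_le _ _) hγ0
      _ ≤ γ * (∑ i, |(d' - d) i| + B) := by
          refine mul_le_mul_of_nonneg_left (add_le_add
            (sum_abs_vecMul_le_of_mem_rowStochastic hM' _) ?_) hγ0
          simpa only [abs_of_nonneg (hd _)] using sum_abs_vecMul_le d (M' - M)
  simp only [Pi.sub_apply] at hX
  rw [div_mul_eq_mul_div, le_div_iff₀ (sub_pos.2 hγ1)]
  linarith

theorem le_add_mul_of_forall_lt_succ_le {a : ℕ → ℝ} {c : ℝ} {n : ℕ}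
    (h : ∀ i < n, a (i + 1) ≤ a i + c) : a n ≤ a 0 + n * c := by
  induction n with
  | zero => simp
  | succ n ih =>
    push_cast
    linarith [ih fun i hi => h i (hi.trans n.lt_succ_self), h n n.lt_succ_self]

section DiscountedResolvent

variable {n : Type*} [Fintype n] [DecidableEq n] {M : Matrix n n ℝ} {γ : ℝ}

/-- The Neumann series of `(1 - γ • M)⁻¹`. -/
noncomputable def discountedResolvent (γ : ℝ) (M : Matrix n n ℝ) : Matrix n n ℝ :=
  ∑' t : ℕ, (γ • M) ^ t

theorem summable_smul_pow_of_mem_rowStochastic (hM : M ∈ rowStochastic ℝ n) (hγ0 : 0 ≤ γ)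
    (hγ1 : γ < 1) : Summable fun t : ℕ => (γ • M) ^ t := by
  refine Pi.summable.2 fun i => Pi.summable.2 fun j => ?_
  have hMt (t : ℕ) : M ^ t ∈ rowStochastic ℝ n := Submonoid.pow_mem _ hM t
  refine (summable_geometric_of_lt_one hγ0 hγ1).of_nonneg_of_le (fun t => ?_) (fun t => ?_) <;>
    simp only [smul_pow, Matrix.smul_apply, smul_eq_mul]
  · exact mul_nonneg (pow_nonneg hγ0 t) (nonneg_of_mem_rowStochastic (hMt t))
  · exact mul_le_of_le_one_right (pow_nonneg hγ0 t) (le_one_of_mem_rowStochastic (hMt t))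

theorem hasSum_discountedResolvent (hM : M ∈ rowStochastic ℝ n) (hγ0 : 0 ≤ γ) (hγ1 : γ < 1) :
    HasSum (fun t : ℕ => (γ • M) ^ t) (discountedResolvent γ M) :=
  (summable_smul_pow_of_mem_rowStochastic hM hγ0 hγ1).hasSum

theorem one_sub_smul_mul_discountedResolvent (hM : M ∈ rowStochastic ℝ n) (hγ0 : 0 ≤ γ)
    (hγ1 : γ < 1) : (1 - γ • M) * discountedResolvent γ M = 1 :=
  (summable_smul_pow_of_mem_rowStochastic hM hγ0 hγ1).one_sub_mul_tsum_pow

theorem discountedResolvent_mul_one_sub_smul (hM : M ∈ rowStochastic ℝ n) (hγ0 : 0 ≤ γ)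
    (hγ1 : γ < 1) : discountedResolvent γ M * (1 - γ • M) = 1 :=
  (summable_smul_pow_of_mem_rowStochastic hM hγ0 hγ1).tsum_pow_mul_one_sub

end DiscountedResolvent

section Pinsker

open InformationTheory

theorem monotoneOn_add_one_mul_log_sub :
    MonotoneOn (fun x : ℝ => (x + 1) * log x - 2 * (x - 1)) (Set.Ioi 0) := by
  have hderiv : ∀ x ∈ Set.Ioi (0 : ℝ),
      HasDerivAt (fun x : ℝ => (x + 1) * log x - 2 * (x - 1)) (log x + x⁻¹ - 1) x := by
    intro x hx
    have hx0 : x ≠ 0 := ne_of_gt hx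
    refine (((hasDerivAt_id x).add_const 1).mul (hasDerivAt_log hx0) |>.sub
      (((hasDerivAt_id x).sub_const 1).const_mul 2)).congr_deriv ?_
    simp only [id]
    field_simp
    ring
  refine monotoneOn_of_hasDerivWithinAt_nonneg (f' := fun x => log x + x⁻¹ - 1) (convex_Ioi 0)
    (fun x hx => (hderiv x hx).continuousAt.continuousWithinAt) (fun x hx => ?_) (fun x hx => ?_)
  all_goals rw [interior_Ioi] at hx
  · exact (hderiv x hx).hasDerivWithinAt
  · linarith [one_sub_inv_le_log_of_pos (Set.mem_Ioi.1 hx)]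

theorem le_of_hasDerivAt_of_sign {f f' : ℝ → ℝ} {c x : ℝ}
    (hf : ∀ y, 0 < y → HasDerivAt f (f' y) y) (hc : 0 < c)
    (hlt : ∀ y, 0 < y → y < c → f' y ≤ 0) (hgt : ∀ y, c < y → 0 ≤ f' y) (hx : 0 < x) :
    f c ≤ f x := by
  have hcont : ∀ a b, 0 < a → ContinuousOn f (Set.Icc a b) := fun a b ha y hy =>
    (hf y (ha.trans_le hy.1)).continuousAt.continuousWithinAt
  rcases le_total x c with hxc | hcx
  · refine antitoneOn_of_hasDerivWithinAt_nonpos (f' := f') (convex_Icc x c) (hcont x c hx)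
      (fun y hy => ?_) (fun y hy => ?_) (Set.left_mem_Icc.2 hxc) (Set.right_mem_Icc.2 hxc) hxc
    all_goals rw [interior_Icc] at hy
    · exact (hf y (hx.trans hy.1)).hasDerivWithinAt
    · exact hlt y (hx.trans hy.1) hy.2
  · refine monotoneOn_of_hasDerivWithinAt_nonneg (f' := f') (convex_Icc c x) (hcont c x hc)
      (fun y hy => ?_) (fun y hy => ?_) (Set.left_mem_Icc.2 hcx) (Set.right_mem_Icc.2 hcx) hcx
    all_goals rw [interior_Icc] at hy
    · exact (hf y (hc.trans hy.1)).hasDerivWithinAt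
    · exact hgt y hy.1

theorem three_mul_sq_sub_one_le_klFun {x : ℝ} (hx : 0 ≤ x) :
    3 * (x - 1) ^ 2 ≤ 2 * (x + 2) * klFun x := by
  rcases hx.eq_or_lt with rfl | hx
  · norm_num [klFun_zero]
  have hderiv : ∀ y, 0 < y → HasDerivAt (fun x => 2 * (x + 2) * klFun x - 3 * (x - 1) ^ 2)
      (4 * ((y + 1) * log y - 2 * (y - 1))) y := by
    intro y hy
    refine ((((hasDerivAt_id y).add_const 2).const_mul 2).mul (hasDerivAt_klFun hy.ne') |>.sub
      ((((hasDerivAt_id y).sub_const 1).pow 2).const_mul 3)).congr_deriv ?_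
    simp only [klFun, id]
    ring
  have hmono := monotoneOn_add_one_mul_log_sub
  have := le_of_hasDerivAt_of_sign hderiv one_pos
    (fun y hy hy1 => by
      have := hmono (Set.mem_Ioi.2 hy) (Set.mem_Ioi.2 one_pos) hy1.le
      norm_num at this
      linarith)
    (fun y hy => by
      have := hmono (Set.mem_Ioi.2 one_pos) (Set.mem_Ioi.2 (one_pos.trans hy)) hy.le
      norm_num at this
      linarith)
    hx
  norm_num [klFun_one] at this
  linarith

theorem mul_log_div_sub_add_eq_mul_klFun {p q : ℝ} (habs : q = 0 → p = 0) :
    p * log (p / q) - p + q = q * klFun (p / q) := by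
  rcases eq_or_ne q 0 with rfl | hq
  · simp [habs rfl]
  · rw [klFun, mul_sub, mul_add, ← mul_assoc, mul_div_cancel₀ p hq]
    ring

theorem sq_sub_le_mul_two_mul_mul_log_div {p q : ℝ} (hp : 0 ≤ p) (hq : 0 ≤ q)
    (habs : q = 0 → p = 0) :
    (p - q) ^ 2 ≤ (p + 2 * q) / 3 * (2 * (p * log (p / q) - p + q)) := by
  rcases hq.eq_or_lt with rfl | hq
  · simp [habs rfl]
  rw [mul_log_div_sub_add_eq_mul_klFun fun h => absurd h hq.ne']
  calc (p - q) ^ 2 = q ^ 2 * (3 * (p / q - 1) ^ 2) / 3 := by field_simp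
    _ ≤ q ^ 2 * (2 * (p / q + 2) * klFun (p / q)) / 3 := by
        gcongr q ^ 2 * ?_ / 3
        exact three_mul_sq_sub_one_le_klFun (div_nonneg hp hq.le)
    _ = (p + 2 * q) / 3 * (2 * (q * klFun (p / q))) := by field_simp

theorem sq_sum_abs_sub_le_two_mul_sum_mul_log_div {ι : Type*} [Fintype ι] {p q : ι → ℝ}
    (hp : p ∈ stdSimplex ℝ ι) (hq : q ∈ stdSimplex ℝ ι) (habs : ∀ i, q i = 0 → p i = 0) :
    (∑ i, |p i - q i|) ^ 2 ≤ 2 * ∑ i, p i * log (p i / q i) := by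
  have h := sum_sq_le_sum_mul_sum_of_sq_le_mul univ
    (r := fun i => |p i - q i|) (f := fun i => (p i + 2 * q i) / 3)
    (g := fun i => 2 * (p i * log (p i / q i) - p i + q i))
    (fun i _ => by linarith [hp.1 i, hq.1 i])
    (fun i _ => by
      rw [mul_log_div_sub_add_eq_mul_klFun (habs i)]
      exact mul_nonneg zero_le_two
        (mul_nonneg (hq.1 i) (klFun_nonneg (div_nonneg (hp.1 i) (hq.1 i)))))
    (fun i _ => by simpa only [sq_abs] using
      sq_sub_le_mul_two_mul_mul_log_div (hp.1 i) (hq.1 i) (habs i))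
  simp only [← sum_div, sum_add_distrib, ← mul_sum, sum_sub_distrib, hp.2, hq.2] at h
  linarith

end Pinsker

theorem sum_abs_transMat_sub_le {S A : Type*} [Fintype S] [Fintype A] {P : S → A → S → ℝ}
    {pol pol' : S → A → ℝ} (hP : ∀ s a, P s a ∈ stdSimplex ℝ S) (s : S) :
    ∑ s', |(transMat P pol' - transMat P pol) s s'| ≤ ∑ a, |pol' s a - pol s a| := by
  have h : (transMat P pol' - transMat P pol) s = (pol' s - pol s) ᵥ* P s := by
    funext s'
    simp only [transMat, Matrix.sub_apply, vecMul, dotProduct, Pi.sub_apply, sub_mul,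
      sum_sub_distrib]
  refine h ▸ (sum_abs_vecMul_le _ _).trans_eq (sum_congr rfl fun a _ => ?_)
  simp only [abs_of_nonneg ((hP s a).1 _), (hP s a).2, mul_one, Pi.sub_apply]

section MDP

variable {S A : Type*} [Fintype S] [DecidableEq S] [Fintype A] {P : S → A → S → ℝ} {γ : ℝ}
  {ρ0 : S → ℝ} {pol pol' : S → A → ℝ}

theorem transMat_mem_rowStochastic (hP : ∀ s a, P s a ∈ stdSimplex ℝ S)
    (hpol : ∀ s, pol s ∈ stdSimplex ℝ A) : transMat P pol ∈ rowStochastic ℝ S := by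
  refine mem_rowStochastic_iff_sum.2 ⟨fun s s' => ?_, fun s => ?_⟩
  · exact sum_nonneg fun a _ => mul_nonneg ((hpol s).1 a) ((hP s a).1 s')
  · simp only [transMat]
    rw [sum_comm]
    simp only [← mul_sum, (hP s _).2, mul_one, (hpol s).2]

noncomputable def expectedSignal (F : S → A → ℝ) (pol : S → A → ℝ) : S → ℝ :=
  fun s => ∑ a, pol s a * F s a

theorem Vfun_eq_discountedResolvent_mulVec (hM : transMat P pol ∈ rowStochastic ℝ S)
    (hγ0 : 0 ≤ γ) (hγ1 : γ < 1) (F : S → A → ℝ) :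
    Vfun P γ F pol = discountedResolvent γ (transMat P pol) *ᵥ expectedSignal F pol := by
  funext s
  rw [← (Pi.hasSum.1 ((hasSum_discountedResolvent hM hγ0 hγ1).matrix_mulVec _) s).tsum_eq]
  simp only [smul_pow, smul_mulVec, Pi.smul_apply, smul_eq_mul]
  rfl

theorem dVisit_eq_vecMul_discountedResolvent (hM : transMat P pol ∈ rowStochastic ℝ S)
    (hγ0 : 0 ≤ γ) (hγ1 : γ < 1) :
    dVisit P γ ρ0 pol = (1 - γ) • ρ0 ᵥ* discountedResolvent γ (transMat P pol) := by
  funext s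
  rw [Pi.smul_apply, smul_eq_mul,
    ← (Pi.hasSum.1 ((hasSum_discountedResolvent hM hγ0 hγ1).matrix_vecMul _) s).tsum_eq]
  simp only [smul_pow, vecMul_smul, Pi.smul_apply, smul_eq_mul]
  rfl

theorem one_sub_smul_transMat_mulVec_Vfun (hM : transMat P pol ∈ rowStochastic ℝ S)
    (hγ0 : 0 ≤ γ) (hγ1 : γ < 1) (F : S → A → ℝ) :
    (1 - γ • transMat P pol) *ᵥ Vfun P γ F pol = expectedSignal F pol := by
  rw [Vfun_eq_discountedResolvent_mulVec hM hγ0 hγ1, mulVec_mulVec,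
    one_sub_smul_mul_discountedResolvent hM hγ0 hγ1, one_mulVec]

theorem dVisit_vecMul_one_sub_smul_transMat (hM : transMat P pol ∈ rowStochastic ℝ S)
    (hγ0 : 0 ≤ γ) (hγ1 : γ < 1) :
    dVisit P γ ρ0 pol ᵥ* (1 - γ • transMat P pol) = (1 - γ) • ρ0 := by
  rw [dVisit_eq_vecMul_discountedResolvent hM hγ0 hγ1, smul_vecMul, vecMul_vecMul,
    discountedResolvent_mul_one_sub_smul hM hγ0 hγ1, vecMul_one]

theorem dVisit_dotProduct_one_sub_smul_transMat_mulVec (hM : transMat P pol ∈ rowStochastic ℝ S)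
    (hγ0 : 0 ≤ γ) (hγ1 : γ < 1) (w : S → ℝ) :
    dVisit P γ ρ0 pol ⬝ᵥ ((1 - γ • transMat P pol) *ᵥ w) = (1 - γ) * (ρ0 ⬝ᵥ w) := by
  rw [dotProduct_mulVec, dVisit_vecMul_one_sub_smul_transMat hM hγ0 hγ1, smul_dotProduct,
    smul_eq_mul]

theorem dVisit_nonneg (hM : transMat P pol ∈ rowStochastic ℝ S) (hγ0 : 0 ≤ γ) (hγ1 : γ < 1)
    (hρ0 : ∀ s, 0 ≤ ρ0 s) (s : S) : 0 ≤ dVisit P γ ρ0 pol s :=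
  mul_nonneg (sub_nonneg.2 hγ1.le) <| tsum_nonneg fun t => mul_nonneg (pow_nonneg hγ0 t) <|
    sum_nonneg fun s0 _ => mul_nonneg (hρ0 s0) (nonneg_of_mem_rowStochastic (pow_mem hM t))

theorem sum_dVisit (hM : transMat P pol ∈ rowStochastic ℝ S) (hγ0 : 0 ≤ γ) (hγ1 : γ < 1)
    (hρ1 : ∑ s, ρ0 s = 1) : ∑ s, dVisit P γ ρ0 pol s = 1 := by
  have h := dVisit_dotProduct_one_sub_smul_transMat_mulVec (ρ0 := ρ0) hM hγ0 hγ1 1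
  rw [sub_mulVec, one_mulVec, smul_mulVec, one_vecMul_of_mem_rowStochastic hM,
    show (1 : S → ℝ) - γ • 1 = (1 - γ) • 1 by rw [sub_smul, one_smul], dotProduct_smul,
    smul_eq_mul, dotProduct_one, dotProduct_one, hρ1, mul_one] at h
  exact (mul_eq_left₀ (sub_ne_zero.2 hγ1.ne')).1 h

theorem sum_mul_Adv_eq (hpol' : ∀ s, ∑ a, pol' s a = 1) (F : S → A → ℝ) :
    (fun s => ∑ a, pol' s a * Adv P γ F pol s a)
      = expectedSignal F pol' - (1 - γ • transMat P pol') *ᵥ Vfun P γ F pol := by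
  funext s
  simp only [Adv, Qfun, expectedSignal, transMat, sub_mulVec, one_mulVec, smul_mulVec, mulVec,
    dotProduct, Pi.sub_apply, Pi.smul_apply, smul_eq_mul, mul_sub, mul_add, sum_sub_distrib,
    sum_add_distrib, ← sum_mul, hpol', one_mul, mul_sum]
  rw [sum_comm]
  simp only [mul_sum, sum_mul, mul_assoc, mul_left_comm γ]
  ring

theorem performance_difference (hM' : transMat P pol' ∈ rowStochastic ℝ S)
    (hpol' : ∀ s, ∑ a, pol' s a = 1) (hγ0 : 0 ≤ γ) (hγ1 : γ < 1) (F : S → A → ℝ) :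
    dVisit P γ ρ0 pol' ⬝ᵥ (fun s => ∑ a, pol' s a * Adv P γ F pol s a)
      = (1 - γ) * (Jret P γ ρ0 F pol' - Jret P γ ρ0 F pol) := by
  rw [sum_mul_Adv_eq hpol', ← one_sub_smul_transMat_mulVec_Vfun hM' hγ0 hγ1, ← mulVec_sub,
    dVisit_dotProduct_one_sub_smul_transMat_mulVec hM' hγ0 hγ1, dotProduct_sub]
  rfl

theorem sum_abs_dVisit_sub_le (hP : ∀ s a, P s a ∈ stdSimplex ℝ S)
    (hpol : ∀ s, pol s ∈ stdSimplex ℝ A) (hpol' : ∀ s, pol' s ∈ stdSimplex ℝ A)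
    (hγ0 : 0 ≤ γ) (hγ1 : γ < 1) (hρ0 : ∀ s, 0 ≤ ρ0 s) :
    ∑ s, |dVisit P γ ρ0 pol' s - dVisit P γ ρ0 pol s|
      ≤ γ / (1 - γ) * ∑ s, dVisit P γ ρ0 pol s * ∑ a, |pol' s a - pol s a| := by
  have hM := transMat_mem_rowStochastic hP hpol
  have hM' := transMat_mem_rowStochastic hP hpol'
  have hd := dVisit_nonneg hM hγ0 hγ1 hρ0
  refine (sum_abs_sub_le_of_vecMul_one_sub_smul_eq hM' hγ0 hγ1 hd
    ((dVisit_vecMul_one_sub_smul_transMat hM' hγ0 hγ1).trans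
      (dVisit_vecMul_one_sub_smul_transMat hM hγ0 hγ1).symm)).trans ?_
  gcongr with s
  · exact hd s
  · exact sum_abs_transMat_sub_le hP s

theorem sum_dVisit_mul_sum_abs_sub_le_sqrt_avgKL (hP : ∀ s a, P s a ∈ stdSimplex ℝ S)
    (hpol : ∀ s, pol s ∈ stdSimplex ℝ A) (hpol' : ∀ s, pol' s ∈ stdSimplex ℝ A)
    (habs : ∀ s a, pol s a = 0 → pol' s a = 0) (hγ0 : 0 ≤ γ) (hγ1 : γ < 1)
    (hρ0 : ∀ s, 0 ≤ ρ0 s) (hρ1 : ∑ s, ρ0 s = 1) :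
    ∑ s, dVisit P γ ρ0 pol s * ∑ a, |pol' s a - pol s a| ≤ √(2 * avgKL P γ ρ0 pol' pol) := by
  have hM := transMat_mem_rowStochastic hP hpol
  have hd := dVisit_nonneg (ρ0 := ρ0) hM hγ0 hγ1 hρ0
  have hpinsker s := sq_sum_abs_sub_le_two_mul_sum_mul_log_div (hpol' s) (hpol s) (habs s)
  refine le_sqrt_of_sq_le ?_
  have h := sum_sq_le_sum_mul_sum_of_sq_le_mul univ
    (r := fun s => dVisit P γ ρ0 pol s * ∑ a, |pol' s a - pol s a|)
    (f := dVisit P γ ρ0 pol) (g := fun s => dVisit P γ ρ0 pol s * (2 * klState pol' pol s))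
    (fun s _ => hd s)
    (fun s _ => mul_nonneg (hd s) ((sq_nonneg _).trans (hpinsker s)))
    (fun s _ => by
      rw [mul_pow, sq, mul_assoc]
      exact mul_le_mul_of_nonneg_left (mul_le_mul_of_nonneg_left (hpinsker s) (hd s)) (hd s))
  rwa [sum_dVisit hM hγ0 hγ1 hρ1, one_mul, ← sum_congr rfl fun s _ => mul_left_comm _ _ _,
    ← mul_sum] at h

theorem abs_sum_mul_Adv_le_epsAdv [Nonempty S] (F : S → A → ℝ) (s : S) :
    |∑ a, pol' s a * Adv P γ F pol s a| ≤ epsAdv P γ F pol pol' :=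
  le_sup' (fun s => |∑ a, pol' s a * Adv P γ F pol s a|) (mem_univ s)

theorem Jret_le_add_surrAdv [Nonempty S] (hP : ∀ s a, P s a ∈ stdSimplex ℝ S)
    (hpol : ∀ s, pol s ∈ stdSimplex ℝ A) (hpol' : ∀ s, pol' s ∈ stdSimplex ℝ A)
    (habs : ∀ s a, pol s a = 0 → pol' s a = 0) (hγ0 : 0 ≤ γ) (hγ1 : γ < 1)
    (hρ0 : ∀ s, 0 ≤ ρ0 s) (hρ1 : ∑ s, ρ0 s = 1) (F : S → A → ℝ) :
    Jret P γ ρ0 F pol' ≤ Jret P γ ρ0 F pol + 1 / (1 - γ) * surrAdv P γ ρ0 F pol pol'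
      + √(2 * avgKL P γ ρ0 pol' pol) * γ / (1 - γ) ^ 2 * epsAdv P γ F pol pol' := by
  set g := fun s => ∑ a, pol' s a * Adv P γ F pol s a
  set ε := epsAdv P γ F pol pol'
  set κ := √(2 * avgKL P γ ρ0 pol' pol)
  have hg := abs_sum_mul_Adv_le_epsAdv (P := P) (γ := γ) (pol := pol) (pol' := pol') F
  have hε : 0 ≤ ε := (abs_nonneg _).trans (hg (Classical.arbitrary S))
  have hpdl := performance_difference (ρ0 := ρ0) (pol := pol)
    (transMat_mem_rowStochastic hP hpol') (fun s => (hpol' s).2) hγ0 hγ1 F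
  have hsurr : surrAdv P γ ρ0 F pol pol' = dVisit P γ ρ0 pol ⬝ᵥ g := rfl
  have herr : (dVisit P γ ρ0 pol' - dVisit P γ ρ0 pol) ⬝ᵥ g ≤ γ / (1 - γ) * κ * ε := by
    calc (dVisit P γ ρ0 pol' - dVisit P γ ρ0 pol) ⬝ᵥ g
        ≤ (∑ s, |dVisit P γ ρ0 pol' s - dVisit P γ ρ0 pol s|) * ε := by
          rw [sum_mul]
          refine sum_le_sum fun s _ => (le_abs_self _).trans ?_
          rw [abs_mul]
          exact mul_le_mul_of_nonneg_left (hg s) (abs_nonneg _)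
      _ ≤ γ / (1 - γ) * κ * ε := by
          refine mul_le_mul_of_nonneg_right ?_ hε
          refine (sum_abs_dVisit_sub_le hP hpol hpol' hγ0 hγ1 hρ0).trans ?_
          exact mul_le_mul_of_nonneg_left
            (sum_dVisit_mul_sum_abs_sub_le_sqrt_avgKL hP hpol hpol' habs hγ0 hγ1 hρ0 hρ1)
            (div_nonneg hγ0 (sub_nonneg.2 hγ1.le))
  rw [sub_dotProduct, hpdl, ← hsurr] at herr
  have h1γ : 0 < 1 - γ := sub_pos.2 hγ1
  have hdiff : Jret P γ ρ0 F pol' - Jret P γ ρ0 F pol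
      ≤ (surrAdv P γ ρ0 F pol pol' + γ / (1 - γ) * κ * ε) / (1 - γ) := by
    rw [le_div_iff₀ h1γ]
    linarith
  calc Jret P γ ρ0 F pol'
      ≤ Jret P γ ρ0 F pol + (surrAdv P γ ρ0 F pol pol' + γ / (1 - γ) * κ * ε) / (1 - γ) := by
        linarith
    _ = _ := by field_simp; ring

theorem Jret_le_add_surrAdv_of_le [Nonempty S] (hP : ∀ s a, P s a ∈ stdSimplex ℝ S)
    (hpol : ∀ s, pol s ∈ stdSimplex ℝ A) (hpol' : ∀ s, pol' s ∈ stdSimplex ℝ A)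
    (habs : ∀ s a, pol s a = 0 → pol' s a = 0) (hγ0 : 0 ≤ γ) (hγ1 : γ < 1)
    (hρ0 : ∀ s, 0 ≤ ρ0 s) (hρ1 : ∑ s, ρ0 s = 1) (F : S → A → ℝ) {δ ε : ℝ}
    (hKL : avgKL P γ ρ0 pol' pol ≤ δ) (hε : epsAdv P γ F pol pol' ≤ ε) :
    Jret P γ ρ0 F pol' ≤ Jret P γ ρ0 F pol + 1 / (1 - γ) * surrAdv P γ ρ0 F pol pol'
      + √(2 * δ) * γ / (1 - γ) ^ 2 * ε := by
  refine (Jret_le_add_surrAdv hP hpol hpol' habs hγ0 hγ1 hρ0 hρ1 F).trans ?_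
  gcongr
  exact (abs_nonneg _).trans (abs_sum_mul_Adv_le_epsAdv F (Classical.arbitrary S))

end MDP

theorem adversarial_interior_point_cost_bound_general {S A : Type*} [Fintype S] [DecidableEq S] [Fintype A] [Nonempty S]
    (P : S → A → S → ℝ) (hP0 : ∀ s a s', 0 ≤ P s a s') (hP1 : ∀ s a, ∑ s', P s a s' = 1)
    (γ : ℝ) (hγ0 : 0 < γ) (hγ1 : γ < 1)
    (ρ0 : S → ℝ) (hρ0 : ∀ s, 0 ≤ ρ0 s) (hρ1 : ∑ s, ρ0 s = 1)
    (δ : ℝ) (t : ℝ) (εC : ℝ) (hεC : 0 ≤ εC) (d : ℝ)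
    (C : S → A → ℝ) (n1 n2 : ℕ) (hn1 : 1 ≤ n1) (σ pol : ℕ → S → A → ℝ)
    (hσ0 : ∀ i ≤ n1, ∀ s a, 0 ≤ σ i s a)
    (hσ1 : ∀ i ≤ n1, ∀ s, ∑ a, σ i s a = 1)
    (hσabs : ∀ i < n1, ∀ s a, σ i s a = 0 → σ (i + 1) s a = 0)
    (hσKL : ∀ i < n1, avgKL P γ ρ0 (σ (i + 1)) (σ i) ≤ δ)
    (hσsurr : ∀ i < n1,
      Jret P γ ρ0 C (σ i) + (1 / (1 - γ)) * surrAdv P γ ρ0 C (σ i) (σ (i + 1)) ≤ d)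
    (hσeps : ∀ i < n1, epsAdv P γ C (σ i) (σ (i + 1)) ≤ εC)
    (hlink : pol 0 = σ n1)
    (hpol0 : ∀ i ≤ n2, ∀ s a, 0 ≤ pol i s a)
    (hpol1 : ∀ i ≤ n2, ∀ s, ∑ a, pol i s a = 1)
    (hpabs : ∀ i < n2, ∀ s a, pol i s a = 0 → pol (i + 1) s a = 0)
    (hpKL : ∀ i < n2, avgKL P γ ρ0 (pol (i + 1)) (pol i) ≤ δ)
    (hpA : ∀ i < n2, surrAdv P γ ρ0 C (pol i) (pol (i + 1)) ≤ 1 / t)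
    (hpeps : ∀ i < n2, epsAdv P γ C (pol i) (pol (i + 1)) ≤ εC) :
    Jret P γ ρ0 C (pol n2) - d ≤
      (n2 : ℝ) / ((1 - γ) * t)
        + (Real.sqrt (2 * δ) * γ / (1 - γ) ^ 2) * ((n1 : ℝ) + (n2 : ℝ)) * εC := by
  have hP s a : P s a ∈ stdSimplex ℝ S := ⟨hP0 s a, hP1 s a⟩
  have hK : 0 ≤ √(2 * δ) * γ / (1 - γ) ^ 2 * εC := by positivity
  have hσstep i (hi : i < n1) := Jret_le_add_surrAdv_of_le hP
    (fun s => ⟨hσ0 i hi.le s, hσ1 i hi.le s⟩) (fun s => ⟨hσ0 (i + 1) hi s, hσ1 (i + 1) hi s⟩)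
    (hσabs i hi) hγ0.le hγ1 hρ0 hρ1 C (hσKL i hi) (hσeps i hi)
  have hpolstep i (hi : i < n2) := Jret_le_add_surrAdv_of_le hP
    (fun s => ⟨hpol0 i hi.le s, hpol1 i hi.le s⟩)
    (fun s => ⟨hpol0 (i + 1) hi s, hpol1 (i + 1) hi s⟩)
    (hpabs i hi) hγ0.le hγ1 hρ0 hρ1 C (hpKL i hi) (hpeps i hi)
  have hstart : Jret P γ ρ0 C (pol 0) ≤ d + √(2 * δ) * γ / (1 - γ) ^ 2 * εC := by
    obtain ⟨m, rfl⟩ := Nat.exists_eq_add_of_le' hn1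
    rw [hlink]
    linarith [hσstep m m.lt_succ_self, hσsurr m m.lt_succ_self]
  have hchain := le_add_mul_of_forall_lt_succ_le (a := fun i => Jret P γ ρ0 C (pol i))
    (c := 1 / ((1 - γ) * t) + √(2 * δ) * γ / (1 - γ) ^ 2 * εC) fun i hi => by
      have : 1 / (1 - γ) * surrAdv P γ ρ0 C (pol i) (pol (i + 1)) ≤ 1 / ((1 - γ) * t) := by
        rw [← one_div_mul_one_div]
        exact mul_le_mul_of_nonneg_left (hpA i hi) (one_div_nonneg.2 (sub_nonneg.2 hγ1.le))
      linarith [hpolstep i hi]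
  have hn1' : (1 : ℝ) ≤ n1 := by exact_mod_cast hn1
  rw [div_eq_mul_one_div (n2 : ℝ)]
  linarith [le_mul_of_one_le_left hK hn1']

/-- adversarial interior-point cost-budget bound
(Proposition 5.2, cost part). -/
theorem adversarial_interior_point_cost_bound {S A : Type*} [Fintype S] [DecidableEq S] [Fintype A] [Nonempty S] [Nonempty A]
    (P : S → A → S → ℝ) (hP0 : ∀ s a s', 0 ≤ P s a s') (hP1 : ∀ s a, ∑ s', P s a s' = 1)
    (γ : ℝ) (hγ0 : 0 < γ) (hγ1 : γ < 1)
    (ρ0 : S → ℝ) (hρ0 : ∀ s, 0 ≤ ρ0 s) (hρ1 : ∑ s, ρ0 s = 1)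
    (δ : ℝ) (hδ : 0 < δ) (t : ℝ) (ht : 0 < t) (εC : ℝ) (hεC : 0 ≤ εC) (d : ℝ)
    (C : S → A → ℝ) (n1 n2 : ℕ) (hn1 : 1 ≤ n1) (σ pol : ℕ → S → A → ℝ)
    (hσ0 : ∀ i ≤ n1, ∀ s a, 0 ≤ σ i s a)
    (hσ1 : ∀ i ≤ n1, ∀ s, ∑ a, σ i s a = 1)
    (hσabs : ∀ i < n1, ∀ s a, σ i s a = 0 → σ (i + 1) s a = 0)
    (hσKL : ∀ i < n1, avgKL P γ ρ0 (σ (i + 1)) (σ i) ≤ δ)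
    (hσsurr : ∀ i < n1,
      Jret P γ ρ0 C (σ i) + (1 / (1 - γ)) * surrAdv P γ ρ0 C (σ i) (σ (i + 1)) ≤ d)
    (hσeps : ∀ i < n1, epsAdv P γ C (σ i) (σ (i + 1)) ≤ εC)
    (hlink : pol 0 = σ n1)
    (hpol0 : ∀ i ≤ n2, ∀ s a, 0 ≤ pol i s a)
    (hpol1 : ∀ i ≤ n2, ∀ s, ∑ a, pol i s a = 1)
    (hpabs : ∀ i < n2, ∀ s a, pol i s a = 0 → pol (i + 1) s a = 0)
    (hpKL : ∀ i < n2, avgKL P γ ρ0 (pol (i + 1)) (pol i) ≤ δ)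
    (hpA : ∀ i < n2, surrAdv P γ ρ0 C (pol i) (pol (i + 1)) ≤ 1 / t)
    (hpeps : ∀ i < n2, epsAdv P γ C (pol i) (pol (i + 1)) ≤ εC) :
    Jret P γ ρ0 C (pol n2) - d ≤
      (n2 : ℝ) / ((1 - γ) * t)
        + (Real.sqrt (2 * δ) * γ / (1 - γ) ^ 2) * ((n1 : ℝ) + (n2 : ℝ)) * εC :=
  adversarial_interior_point_cost_bound_general P hP0 hP1 γ hγ0 hγ1 ρ0 hρ0 hρ1 δ t εC hεC d C n1 n2
    hn1 σ pol hσ0 hσ1 hσabs hσKL hσsurr hσeps hlink hpol0 hpol1 hpabs hpKL hpA hpeps
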